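/- Let N be prime. There exist distinct vectors α₀, α₁ ∈ ℂ^{2N} with |supp α₀| ≤ N/2 + 1, |supp α₁| ≤ N/2 + 1, and Φα₀ = Φα₁, where Φ = [I F*] is the spikes-and-sinusoids dictionary. -/
import Mathlib


open scoped Classical

/-- The adjoint (inverse) unitary discrete Fourier transform. -/
noncomputable def idft (N : ℕ) [NeZero N] (b : ZMod N → ℂ) : ZMod N → ℂ :=
  fun t => (1 / Real.sqrt N : ℂ) *
    ∑ ω : ZMod N, b ω *
      Complex.exp ((2 * Real.pi * Complex.I * (ω.val : ℂ) * (t.val : ℂ)) / N)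

/-- The spikes-and-sinusoids dictionary `Φ = [I  F*] : ℂ^{2N} → ℂ^N`. -/
noncomputable def spikeSin (N : ℕ) [NeZero N]
    (α : (ZMod N → ℂ) × (ZMod N → ℂ)) : ZMod N → ℂ :=
  fun t => α.1 t + idft N α.2 t

/-- The `ℓ₀` "norm" (support size) of a coefficient vector in `ℂ^{2N}`. -/
noncomputable def l0 (N : ℕ) [NeZero N] (α : (ZMod N → ℂ) × (ZMod N → ℂ)) : ℕ :=
  (Finset.univ.filter (fun t => α.1 t ≠ 0)).card +
    (Finset.univ.filter (fun ω => α.2 ω ≠ 0)).card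

/-- For `N` prime, there are two distinct coefficient vectors of support size
at most `N/2 + 1` with the same image under the spikes-and-sinusoids
dictionary. -/
theorem stmt_8 (N : ℕ) (hN : N.Prime) [NeZero N] :
    ∃ α₀ α₁ : (ZMod N → ℂ) × (ZMod N → ℂ), α₀ ≠ α₁ ∧
      (l0 N α₀ : ℝ) ≤ N / 2 + 1 ∧ (l0 N α₁ : ℝ) ≤ N / 2 + 1 ∧
      spikeSin N α₀ = spikeSin N α₁ := by
  have hNpos : 0 < N := hN.pos
  set k := (N + 1) / 2 with hk
  have hkN : k ≤ N := by omega
  have hs : Real.sqrt N ≠ 0 := by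
    positivity
  have hc : ((Real.sqrt N : ℂ)) ≠ 0 := by exact_mod_cast hs
  have hval : ∀ c : ℂ, c ≠ 0 → ∀ (p : ZMod N → Prop) [DecidablePred p],
      (Finset.univ.filter (fun t : ZMod N => (if p t then c else 0) ≠ 0)).card
        = (Finset.univ.filter (fun t : ZMod N => p t)).card := by
    intro c hc0 p _
    congr 1
    ext t
    by_cases h : p t <;> simp [h, hc0]
  have hcard : (Finset.univ.filter (fun t : ZMod N => t.val < k)).card = k := by
    rw [← Finset.card_range k]
    apply Finset.card_bij (fun t _ => ZMod.val t)
    · intro a ha; simpa using (Finset.mem_filter.mp ha).2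
    · intro a _ b _ h; exact ZMod.val_injective N h
    · intro b hb
      simp only [Finset.mem_range] at hb
      refine ⟨(b : ZMod N), ?_, ?_⟩
      · simp [ZMod.val_natCast, Nat.mod_eq_of_lt (lt_of_lt_of_le hb hkN), hb]
      · simp [ZMod.val_natCast, Nat.mod_eq_of_lt (lt_of_lt_of_le hb hkN)]
  have hcard' : (Finset.univ.filter (fun t : ZMod N => ¬ t.val < k)).card = N - k := by
    have := Finset.card_filter_add_card_filter_not
      (s := (Finset.univ : Finset (ZMod N))) (p := fun t : ZMod N => t.val < k)
    have hu : (Finset.univ : Finset (ZMod N)).card = N := by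
      simp [ZMod.card]
    omega
  set c : ℂ := (1 / Real.sqrt N : ℂ) with hcdef
  have hcne : c ≠ 0 := by
    simp [hcdef, hc]
  refine ⟨⟨fun t => if t.val < k then -c else 0, fun _ => 0⟩,
          ⟨fun t => if t.val < k then 0 else c, fun ω => if ω = 0 then -1 else 0⟩,
          ?_, ?_, ?_, ?_⟩
  · intro h
    have := congrFun (congrArg Prod.snd h) 0
    simp at this
  · -- l0 bound for α₀
    have h1 : l0 N (⟨fun t => if t.val < k then -c else 0, fun _ => 0⟩ :
        (ZMod N → ℂ) × (ZMod N → ℂ)) = k := by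
      unfold l0
      simp only
      rw [hval (-c) (by simpa using hcne) (fun t => t.val < k)]
      simp [hcard]
    rw [h1]
    have : 2 * k ≤ N + 2 := by omega
    have := (Nat.cast_le (α := ℝ)).mpr this
    push_cast at this
    linarith
  · have h1 : l0 N (⟨fun t => if t.val < k then 0 else c, fun ω => if ω = 0 then -1 else 0⟩ :
        (ZMod N → ℂ) × (ZMod N → ℂ)) = (N - k) + 1 := by
      unfold l0
      simp only
      have e1 : (Finset.univ.filter
          (fun t : ZMod N => (if t.val < k then 0 else c) ≠ 0)).card = N - k := by
        rw [← hcard']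
        congr 1
        ext t
        by_cases h : t.val < k <;> simp [h, hcne]
      have e2 : (Finset.univ.filter
          (fun ω : ZMod N => (if ω = 0 then (-1 : ℂ) else 0) ≠ 0)).card = 1 := by
        rw [hval (-1) (by norm_num) (fun ω : ZMod N => ω = 0)]
        simp [Finset.filter_eq']
      rw [e1, e2]
    rw [h1]
    have h2 : 2 * ((N - k) + 1) ≤ N + 2 := by omega
    have h3 := (Nat.cast_le (α := ℝ)).mpr h2
    push_cast [Nat.cast_sub hkN] at h3 ⊢
    linarith
  · funext t
    simp only [spikeSin, idft]
    have hz : ∑ ω : ZMod N, (0 : ℂ) *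
        Complex.exp ((2 * Real.pi * Complex.I * (ω.val : ℂ) * (t.val : ℂ)) / N) = 0 := by
      simp
    have hsum : ∑ ω : ZMod N, (if ω = 0 then (-1 : ℂ) else 0) *
        Complex.exp ((2 * Real.pi * Complex.I * (ω.val : ℂ) * (t.val : ℂ)) / N)
        = -1 := by
      rw [Finset.sum_eq_single (0 : ZMod N)]
      · simp [ZMod.val_zero]
      · intro b _ hb; simp [hb]
      · simp
    rw [hz, hsum]
    by_cases h : t.val < k <;> simp [h, hcdef]
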